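/- Let b_n be a sequence of nonzero complex numbers with positive real part such that M := sup_n 1/(Re(b_{2n−1}) Re(1/b_{2n})) < ∞, and let C > 0 with C² ≥ M/4. Then for every n and every w with |w − C| ≤ C, the even modified convergent f_{2n}(w) = 1/(b_1 + 1/(b_2 + ··· + 1/(b_{2n} + w)···)) satisfies |f_{2n}(w) − C| ≤ C. -/

import Mathlib

/-- The finite continued fraction associated with the denominators `b`:
`F_0 = w`, `F_{k+1} = 1/(b (N - k) + F_k)`, so that
`F_N = 1/(b 1 + 1/(b 2 + ⋯ + 1/(b N + w)⋯))`. -/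
noncomputable def contFrac (N : ℕ) (b : ℕ → ℂ) (w : ℂ) : ℕ → ℂ :=
  Nat.rec w (fun k F => 1 / (b (N - k) + F))

/-!
Write `ρ z = |z|² / Re z = 1 / Re (1/z)` for `Re z > 0`. The closed disk `|u - C| ≤ C` is
`{0} ∪ {ρ u ≤ 2C}`, the inversion of the half-plane `Re v ≥ 1/(2C)`. By the triangle inequality and
Cauchy–Schwarz `ρ` is subadditive, so for `u` in the disk `Re (1/(b₂ₘ + u)) ≥ 1/(ρ b₂ₘ + 2C)`; together with
`ρ b₂ₘ ≤ 4C² Re b₂ₘ₋₁`, which follows from `M ≤ 4C²`, this puts `Re (b₂ₘ₋₁ + 1/(b₂ₘ + u))`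
in the half-plane, so two steps of the continued fraction map the disk into itself.
-/

open Complex Metric

theorem contFrac_succ (N : ℕ) (b : ℕ → ℂ) (w : ℂ) (k : ℕ) :
    contFrac N b w (k + 1) = (b (N - k) + contFrac N b w k)⁻¹ :=
  one_div _

theorem contFrac_two_mul_mem {S : Set ℂ} {n : ℕ} {b : ℕ → ℂ} {w : ℂ} (hw : w ∈ S)
    (hS : ∀ m, 1 ≤ m → m ≤ n → ∀ u ∈ S, (b (2 * m - 1) + (b (2 * m) + u)⁻¹)⁻¹ ∈ S) :
    ∀ k ≤ n, contFrac (2 * n) b w (2 * k) ∈ S := by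
  intro k
  induction k with
  | zero => intro _; exact hw
  | succ k ih =>
    intro hk
    have hodd : 2 * n - (2 * k + 1) = 2 * (n - k) - 1 := by omega
    have heven : 2 * n - 2 * k = 2 * (n - k) := by omega
    rw [show 2 * (k + 1) = 2 * k + 1 + 1 by ring, contFrac_succ, contFrac_succ, hodd, heven]
    exact hS (n - k) (by omega) (by omega) _ (ih (by omega))

theorem Complex.inv_re_eq_inv_normSq_div_re (z : ℂ) : z⁻¹.re = (normSq z / z.re)⁻¹ := by
  rw [inv_div, inv_re]

theorem Complex.normSq_add_div_re_le {z u : ℂ} (hz : 0 < z.re) (hu : 0 < u.re) :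
    normSq (z + u) / (z + u).re ≤ normSq z / z.re + normSq u / u.re := by
  have htitu : (‖z‖ + ‖u‖) ^ 2 / (z.re + u.re) ≤ ‖z‖ ^ 2 / z.re + ‖u‖ ^ 2 / u.re := by
    rw [div_add_div _ _ hz.ne' hu.ne', div_le_div_iff₀ (by positivity) (by positivity)]
    nlinarith [sq_nonneg (‖z‖ * u.re - ‖u‖ * z.re), mul_pos hz hu]
  rw [← Complex.sq_norm, ← Complex.sq_norm, ← Complex.sq_norm, add_re]
  calc ‖z + u‖ ^ 2 / (z.re + u.re) ≤ (‖z‖ + ‖u‖) ^ 2 / (z.re + u.re) := by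
        gcongr
        exact norm_add_le z u
    _ ≤ _ := htitu

theorem Complex.mem_closedBall_iff_normSq_le {C : ℝ} (hC : 0 ≤ C) {u : ℂ} :
    u ∈ closedBall (C : ℂ) C ↔ normSq u ≤ 2 * C * u.re := by
  have hsq : ‖u - C‖ ^ 2 = normSq u - 2 * C * u.re + C ^ 2 := by
    rw [Complex.sq_norm, normSq_sub]
    simp only [normSq_ofReal, conj_ofReal, mul_re, ofReal_re, ofReal_im, mul_zero, sub_zero]
    ring
  rw [mem_closedBall, dist_eq_norm, ← sq_le_sq₀ (norm_nonneg _) hC, hsq]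
  constructor <;> intro h <;> linarith

theorem Complex.inv_mem_closedBall_of_one_le {C : ℝ} (hC : 0 < C) {v : ℂ}
    (hv : 1 ≤ 2 * C * v.re) : v⁻¹ ∈ closedBall (C : ℂ) C := by
  have hv0 : v ≠ 0 := by
    rintro rfl
    norm_num at hv
  have hns : 0 < normSq v := normSq_pos.2 hv0
  rw [mem_closedBall_iff_normSq_le hC.le, normSq_inv, inv_re, mul_div_assoc',
    inv_eq_one_div]
  gcongr

theorem Complex.inv_add_inv_add_mem_closedBall {C : ℝ} (hC : 0 < C) {α β u : ℂ}
    (hβ : 0 < β.re) (hαβ : normSq β / β.re ≤ 4 * C ^ 2 * α.re)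
    (hu : u ∈ closedBall (C : ℂ) C) : (α + (β + u)⁻¹)⁻¹ ∈ closedBall (C : ℂ) C := by
  rw [mem_closedBall_iff_normSq_le hC.le] at hu
  have hu_re : 0 ≤ u.re := by nlinarith [normSq_nonneg u]
  have hρβ : 0 < normSq β / β.re := div_pos (normSq_pos.2 fun h ↦ by simp [h] at hβ) hβ
  have hβu : 0 < (β + u).re := by rw [add_re]; linarith
  have hρ_pos : 0 < normSq (β + u) / (β + u).re :=
    div_pos (normSq_pos.2 fun h ↦ by simp [h] at hβu) hβu
  have hρ : normSq (β + u) / (β + u).re ≤ normSq β / β.re + 2 * C := by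
    rcases eq_or_ne u 0 with rfl | hu0
    · simp only [add_zero]
      linarith
    have hu_pos : 0 < u.re := by nlinarith [normSq_pos.2 hu0]
    calc normSq (β + u) / (β + u).re ≤ normSq β / β.re + normSq u / u.re :=
          normSq_add_div_re_le hβ hu_pos
      _ ≤ normSq β / β.re + 2 * C := by gcongr; exact (div_le_iff₀ hu_pos).2 hu
  apply inv_mem_closedBall_of_one_le hC
  rw [add_re, inv_re_eq_inv_normSq_div_re]
  set ρ := normSq β / β.re
  calc (1 : ℝ) = ρ / (ρ + 2 * C) + 2 * C / (ρ + 2 * C) := by field_simp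
    _ ≤ ρ / (2 * C) + 2 * C / (ρ + 2 * C) := by gcongr; linarith
    _ = 2 * C * (ρ / (4 * C ^ 2) + (ρ + 2 * C)⁻¹) := by field_simp; ring
    _ ≤ 2 * C * (α.re + (normSq (β + u) / (β + u).re)⁻¹) := by
        gcongr
        exact (div_le_iff₀' (by positivity)).2 hαβ

theorem even_convergents_in_shifted_disk (b : ℕ → ℂ)
    (hb : ∀ n, 1 ≤ n → 0 < (b n).re)
    (M : ℝ)
    (hM : ∀ n, 1 ≤ n → 1 / ((b (2 * n - 1)).re * (1 / b (2 * n)).re) ≤ M)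
    (C : ℝ) (hC : 0 < C)
    (hC2 : M / 4 ≤ C ^ 2) :
    ∀ n : ℕ, ∀ w : ℂ, ‖w - (C : ℂ)‖ ≤ C →
      ‖contFrac (2 * n) b w (2 * n) - (C : ℂ)‖ ≤ C := by
  intro n w hw
  refine mem_closedBall_iff_norm.1 <|
    contFrac_two_mul_mem (mem_closedBall_iff_norm.2 hw) (fun m hm _ u hu ↦ ?_) n le_rfl
  have hα := hb (2 * m - 1) (by omega)
  have hβ := hb (2 * m) (by omega)
  refine inv_add_inv_add_mem_closedBall hC hβ ?_ hu
  have hM' := hM m hm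
  rw [one_div (b (2 * m)), inv_re_eq_inv_normSq_div_re, ← div_eq_mul_inv, one_div_div,
    div_le_iff₀ hα] at hM'
  calc _ ≤ M * (b (2 * m - 1)).re := hM'
    _ ≤ 4 * C ^ 2 * (b (2 * m - 1)).re := by gcongr; linarith
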